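/- arXiv:math/0308110 — 2 statements merged into one kernel-verified Lean document; each statement's English description precedes it below -/
import Mathlib

section
/- Let 1 ≤ k < n. For all skew-Hermitian X, Y ∈ ℂ^{n×n} of the block form [[A, −B†],[B, 0]] (A ∈ ℂ^{k×k} skew-Hermitian, B ∈ ℂ^{(n−k)×k}) satisfying (1/2)‖X‖_F² = (1/2)‖Y‖_F² = 1 and Re tr(X†Y) = 0, the sectional curvature of the Stiefel manifold satisfies K(X,Y) = (1/8)·‖[X,Y]‖_F² + (3/8)·‖Π([X,Y])‖_F² ≤ 5/2, where [X,Y] = XY − YX and Π(Z) denotes the matrix whose lower-right (n−k)×(n−k) block equals that of Z and whose other blocks are zero. -/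
open Matrix

/-- The Frobenius norm of a complex matrix. -/
noncomputable def frobNorm {m n : Type*} [Fintype m] [Fintype n]
    (M : Matrix m n ℂ) : ℝ :=
  Real.sqrt (∑ i, ∑ j, ‖M i j‖ ^ 2)

/-- Projection onto the vertical subalgebra of the Stiefel manifold: keep only the
lower-right `(n−k)×(n−k)` block. -/
def verticalProjStiefel (k m : ℕ) (Z : Matrix (Fin k ⊕ Fin m) (Fin k ⊕ Fin m) ℂ) :
    Matrix (Fin k ⊕ Fin m) (Fin k ⊕ Fin m) ℂ :=
  Matrix.fromBlocks 0 0 0 (Z.toBlocks₂₂)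

/-!
Write `aᵢ = ‖Aᵢ‖_F` and `bᵢ = ‖Bᵢ‖_F`, so that the normalisation reads `aᵢ² + 2bᵢ² = 2`.
The commutator of two horizontal matrices `[[A, -Bᴴ], [B, 0]]` is again a block matrix whose
blocks are differences of products of the `Aᵢ`, `Bᵢ`, `Bᵢᴴ`; the triangle inequality and
submultiplicativity of the Frobenius norm bound them by `2(a₁a₂ + b₁b₂)`, `a₁b₂ + a₂b₁` (twice)
and `2b₁b₂`. What remains is a polynomial inequality in `a₁, a₂, b₁, b₂`.
-/

/-- Substituting `aᵢ² = 2 - 2bᵢ²`, the claim becomes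
`3a₁a₂b₁b₂ ≤ 1 + 3(b₁² + b₂²) - 7b₁²b₂²`; AM–GM on `(a₁b₂)(a₂b₁)` bounds the left side by
`3(b₁² + b₂²) - 6b₁²b₂²`, so it suffices that `b₁²b₂² ≤ 1`. -/
lemma block_norm_bound_le_five_halves {a₁ a₂ b₁ b₂ : ℝ}
    (h₁ : a₁ ^ 2 + 2 * b₁ ^ 2 = 2) (h₂ : a₂ ^ 2 + 2 * b₂ ^ 2 = 2) :
    (a₁ * a₂ + b₁ * b₂) ^ 2 / 2 + (a₁ * b₂ + a₂ * b₁) ^ 2 / 4 + 2 * (b₁ * b₂) ^ 2 ≤ 5 / 2 := by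
  have hb₁ : b₁ ^ 2 ≤ 1 := by nlinarith [sq_nonneg a₁]
  have hb₂ : b₂ ^ 2 ≤ 1 := by nlinarith [sq_nonneg a₂]
  have hb : b₁ ^ 2 * b₂ ^ 2 ≤ 1 := mul_le_one₀ hb₁ (sq_nonneg _) hb₂
  nlinarith [sq_nonneg (a₁ * b₂ - a₂ * b₁)]

lemma fromBlocks_commutator_of_zero₂₂ {m n R : Type*} [Fintype m] [Fintype n] [Ring R]
    (A₁ A₂ : Matrix m m R) (P₁ P₂ : Matrix m n R) (Q₁ Q₂ : Matrix n m R) :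
    fromBlocks A₁ P₁ Q₁ 0 * fromBlocks A₂ P₂ Q₂ 0 - fromBlocks A₂ P₂ Q₂ 0 * fromBlocks A₁ P₁ Q₁ 0 =
      fromBlocks ((A₁ * A₂ - A₂ * A₁) + (P₁ * Q₂ - P₂ * Q₁)) (A₁ * P₂ - A₂ * P₁)
        (Q₁ * A₂ - Q₂ * A₁) (Q₁ * P₂ - Q₂ * P₁) := by
  simp only [fromBlocks_multiply, sub_eq_add_neg, fromBlocks_neg, fromBlocks_add,
    Matrix.mul_zero, Matrix.zero_mul, add_zero]
  congr 1
  abel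

section

variable {l m n p q : Type*} [Fintype l] [Fintype m] [Fintype n] [Fintype p] [Fintype q]

attribute [local instance] Matrix.frobeniusSeminormedAddCommGroup

lemma frobNorm_eq_norm (M : Matrix m n ℂ) : frobNorm M = ‖M‖ := by
  rw [frobNorm, frobenius_norm_def, Real.sqrt_eq_rpow]
  simp only [Real.rpow_two]

lemma frobNorm_nonneg (M : Matrix m n ℂ) : 0 ≤ frobNorm M := Real.sqrt_nonneg _

lemma frobNorm_zero : frobNorm (0 : Matrix m n ℂ) = 0 := by
  simp [frobNorm]

lemma frobNorm_neg_conjTranspose (M : Matrix m n ℂ) : frobNorm (-Mᴴ) = frobNorm M := by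
  rw [frobNorm_eq_norm, frobNorm_eq_norm, norm_neg, frobenius_norm_conjTranspose]

lemma frobNorm_add_le (M N : Matrix m n ℂ) : frobNorm (M + N) ≤ frobNorm M + frobNorm N := by
  simpa only [frobNorm_eq_norm] using norm_add_le M N

lemma frobNorm_mul_sub_mul_le (M₁ M₂ : Matrix l m ℂ) (N₁ N₂ : Matrix m n ℂ) :
    frobNorm (M₁ * N₂ - M₂ * N₁) ≤ frobNorm M₁ * frobNorm N₂ + frobNorm M₂ * frobNorm N₁ := by
  simp only [frobNorm_eq_norm]
  exact (norm_sub_le _ _).trans (add_le_add (frobenius_norm_mul _ _) (frobenius_norm_mul _ _))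

lemma sq_frobNorm (M : Matrix m n ℂ) : frobNorm M ^ 2 = ∑ i, ∑ j, ‖M i j‖ ^ 2 :=
  Real.sq_sqrt (by positivity)

lemma sq_frobNorm_fromBlocks (A : Matrix m p ℂ) (B : Matrix m q ℂ) (C : Matrix n p ℂ)
    (D : Matrix n q ℂ) :
    frobNorm (fromBlocks A B C D) ^ 2 =
      frobNorm A ^ 2 + frobNorm B ^ 2 + frobNorm C ^ 2 + frobNorm D ^ 2 := by
  simp only [sq_frobNorm, Fintype.sum_sum_type, fromBlocks_apply₁₁, fromBlocks_apply₁₂,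
    fromBlocks_apply₂₁, fromBlocks_apply₂₂, Finset.sum_add_distrib]
  ring

lemma sq_frobNorm_fromBlocks_horizontal (A : Matrix m m ℂ) (B : Matrix n m ℂ) :
    frobNorm (fromBlocks A (-Bᴴ) B 0) ^ 2 = frobNorm A ^ 2 + 2 * frobNorm B ^ 2 := by
  rw [sq_frobNorm_fromBlocks, frobNorm_neg_conjTranspose, frobNorm_zero]
  ring

end

lemma frobNorm_verticalProjStiefel {k m : ℕ} (Z : Matrix (Fin k ⊕ Fin m) (Fin k ⊕ Fin m) ℂ) :
    frobNorm (verticalProjStiefel k m Z) = frobNorm Z.toBlocks₂₂ := by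
  rw [← sq_eq_sq₀ (frobNorm_nonneg _) (frobNorm_nonneg _), verticalProjStiefel,
    sq_frobNorm_fromBlocks, frobNorm_zero, frobNorm_zero, frobNorm_zero]
  ring

theorem stiefel_sectional_curvature_le_general (k m : ℕ)
    (A₁ A₂ : Matrix (Fin k) (Fin k) ℂ) (B₁ B₂ : Matrix (Fin m) (Fin k) ℂ) :
    let X := Matrix.fromBlocks A₁ (-B₁ᴴ) B₁ 0
    let Y := Matrix.fromBlocks A₂ (-B₂ᴴ) B₂ 0
    (1 / 2) * frobNorm X ^ 2 = 1 →
    (1 / 2) * frobNorm Y ^ 2 = 1 →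
    (Matrix.trace (Xᴴ * Y)).re = 0 →
    (1 / 8) * frobNorm (X * Y - Y * X) ^ 2 +
      (3 / 8) * frobNorm (verticalProjStiefel k m (X * Y - Y * X)) ^ 2 ≤ 5 / 2 := by
  intro X Y hX hY _
  rw [sq_frobNorm_fromBlocks_horizontal] at hX hY
  rw [fromBlocks_commutator_of_zero₂₂, frobNorm_verticalProjStiefel, toBlocks_fromBlocks₂₂,
    sq_frobNorm_fromBlocks]
  have h₁₁ := (frobNorm_add_le _ _).trans (add_le_add (frobNorm_mul_sub_mul_le A₁ A₂ A₁ A₂)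
    (frobNorm_mul_sub_mul_le (-B₁ᴴ) (-B₂ᴴ) B₁ B₂))
  have h₁₂ := frobNorm_mul_sub_mul_le A₁ A₂ (-B₁ᴴ) (-B₂ᴴ)
  have h₂₁ := frobNorm_mul_sub_mul_le B₁ B₂ A₁ A₂
  have h₂₂ := frobNorm_mul_sub_mul_le B₁ B₂ (-B₁ᴴ) (-B₂ᴴ)
  simp only [frobNorm_neg_conjTranspose] at h₁₁ h₁₂ h₂₁ h₂₂
  have s₁₁ := pow_le_pow_left₀ (frobNorm_nonneg _) h₁₁ 2
  have s₁₂ := pow_le_pow_left₀ (frobNorm_nonneg _) h₁₂ 2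
  have s₂₁ := pow_le_pow_left₀ (frobNorm_nonneg _) h₂₁ 2
  have s₂₂ := pow_le_pow_left₀ (frobNorm_nonneg _) h₂₂ 2
  have hbound := block_norm_bound_le_five_halves (a₁ := frobNorm A₁) (a₂ := frobNorm A₂)
    (b₁ := frobNorm B₁) (b₂ := frobNorm B₂) (by linarith) (by linarith)
  linarith

/-- **Sectional curvature bound for the Stiefel manifold** `V_{k,n}` (`1 ≤ k < n`,
`m = n − k ≥ 1`): for orthonormal horizontal tangents `X, Y` of block form
`[[A, −Bᴴ],[B, 0]]`, the sectional curvature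
`K(X,Y) = (1/8)‖[X,Y]‖_F² + (3/8)‖[X,Y]^∥‖_F²` is at most `5/2`. -/
theorem stiefel_sectional_curvature_le (k m : ℕ) (hk : 1 ≤ k) (hm : 1 ≤ m)
    (A₁ A₂ : Matrix (Fin k) (Fin k) ℂ) (B₁ B₂ : Matrix (Fin m) (Fin k) ℂ)
    (hA₁ : A₁ᴴ = -A₁) (hA₂ : A₂ᴴ = -A₂) :
    let X := Matrix.fromBlocks A₁ (-B₁ᴴ) B₁ 0
    let Y := Matrix.fromBlocks A₂ (-B₂ᴴ) B₂ 0
    (1 / 2) * frobNorm X ^ 2 = 1 →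
    (1 / 2) * frobNorm Y ^ 2 = 1 →
    (Matrix.trace (Xᴴ * Y)).re = 0 →
    (1 / 8) * frobNorm (X * Y - Y * X) ^ 2 +
      (3 / 8) * frobNorm (verticalProjStiefel k m (X * Y - Y * X)) ^ 2 ≤ 5 / 2 :=
  stiefel_sectional_curvature_le_general k m A₁ A₂ B₁ B₂
end

section
/- Let 1 ≤ k ≤ n − k, let σ ∈ ℝ^k, W ∈ ℂ^{k×k} unitary, and V₁ ∈ ℂ^{(n−k)×k} with V₁†V₁ = 1_k, and set B = V₁·diag(σ)·W† ∈ ℂ^{(n−k)×k}. Then for the skew-Hermitian block matrix X = [[0, −B†],[B, 0]] ∈ ℂ^{n×n} one has exp(X)·[1_k; 0] = [ W·diag(cos σ₁,…,cos σ_k)·W† ; V₁·diag(sin σ₁,…,sin σ_k)·W† ]. In particular the singular values of the upper k×k block of exp(X)·[1_k;0] are cos σ₁, …, cos σ_k, so the principal angles between the subspaces ⟨[1_k;0]⟩ and ⟨exp(X)[1_k;0]⟩ equal the singular values of B. -/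
/-!
If `B = V₁ Σ Wᴴ`, then `X = [[0, -Bᴴ], [B, 0]]` has the eigenvectors `[W; c V₁]` with
`c = ∓i`, with diagonal eigenvalue matrices `±iΣ`: indeed `B W = V₁ Σ` and `Bᴴ V₁ = W Σ`.
Hence `exp X [W; c V₁] = [W; c V₁] exp(-cΣ)`, and averaging the two eigenvector matrices gives
`exp X [W; 0] = [W cos Σ; V₁ sin Σ]`. Multiplying on the right by `Wᴴ` turns `[W; 0]` into
`[1_k; 0]`.
-/

open Matrix

/-- The base point `Ψ₀ = [1_k; 0]` of the Stiefel manifold, with rows indexed by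
`Fin k ⊕ Fin m` (so the ambient dimension is `n = k + m`). -/
def basePoint (k m : ℕ) : Matrix (Fin k ⊕ Fin m) (Fin k) ℂ :=
  Matrix.of fun i j => Sum.elim (fun i' => if i' = j then (1 : ℂ) else 0) (fun _ => 0) i

open Complex

namespace Matrix

variable {m p : Type*} [Fintype m] [DecidableEq m] [Fintype p] [DecidableEq p]

theorem pow_mul_of_mul_eq_mul {R : Type*} [Semiring R] {X : Matrix m m R} {D : Matrix p p R}
    {F : Matrix m p R} (h : X * F = F * D) (k : ℕ) : X ^ k * F = F * D ^ k := by
  induction k with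
  | zero => simp
  | succ k ih =>
    rw [pow_succ, Matrix.mul_assoc, h, ← Matrix.mul_assoc, ih, Matrix.mul_assoc, ← pow_succ]

theorem exp_mul_of_mul_eq_mul {𝕂 : Type*} [RCLike 𝕂] {X : Matrix m m 𝕂} {D : Matrix p p 𝕂}
    {F : Matrix m p 𝕂} (h : X * F = F * D) :
    NormedSpace.exp X * F = F * NormedSpace.exp D := by
  let rightMulF : Matrix m m 𝕂 →+ Matrix m p 𝕂 :=
    AddMonoidHom.mk' (· * F) fun _ _ => Matrix.add_mul _ _ _
  let leftMulF : Matrix p p 𝕂 →+ Matrix m p 𝕂 :=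
    AddMonoidHom.mk' (F * ·) fun _ _ => Matrix.mul_add _ _ _
  open scoped Norms.Operator in
  have hX := (NormedSpace.exp_series_hasSum_exp' (𝕂 := 𝕂) X).map rightMulF
    (continuous_id.matrix_mul continuous_const)
  open scoped Norms.Operator in
  have hD := (NormedSpace.exp_series_hasSum_exp' (𝕂 := 𝕂) D).map leftMulF
    (continuous_const.matrix_mul continuous_id)
  have hterms : (rightMulF ∘ fun k => (k.factorial⁻¹ : 𝕂) • X ^ k) =
      leftMulF ∘ fun k => (k.factorial⁻¹ : 𝕂) • D ^ k := by
    funext k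
    simp [rightMulF, leftMulF, pow_mul_of_mul_eq_mul h]
  exact (hterms ▸ hX).unique hD

end Matrix

section SkewBlock

variable {ι μ : Type*} [Fintype ι] [DecidableEq ι]
  {σ : ι → ℝ} {W : Matrix ι ι ℂ} {V₁ B : Matrix μ ι ℂ}

theorem svd_mul_eq (hW : Wᴴ * W = 1) (hB : B = V₁ * diagonal (fun i => (σ i : ℂ)) * Wᴴ) :
    B * W = V₁ * diagonal (fun i => (σ i : ℂ)) := by
  rw [hB, Matrix.mul_assoc, hW, Matrix.mul_one]

theorem svd_conjTranspose_mul_eq [Fintype μ] (hV₁ : V₁ᴴ * V₁ = 1)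
    (hB : B = V₁ * diagonal (fun i => (σ i : ℂ)) * Wᴴ) :
    Bᴴ * V₁ = W * diagonal (fun i => (σ i : ℂ)) := by
  simp [hB, Matrix.mul_assoc, hV₁, Pi.star_def]

theorem skewBlock_mul_fromRows [Fintype μ] (hW : Wᴴ * W = 1) (hV₁ : V₁ᴴ * V₁ = 1)
    (hB : B = V₁ * diagonal (fun i => (σ i : ℂ)) * Wᴴ) {c : ℂ} (hc : c * c = -1) :
    fromBlocks 0 (-Bᴴ) B 0 * fromRows W (c • V₁) =
      fromRows W (c • V₁) * diagonal (fun l => -c * σ l) := by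
  have hdiag : diagonal (fun l => -c * σ l) = -c • diagonal (fun l => (σ l : ℂ)) := by
    rw [← diagonal_smul]; rfl
  rw [fromBlocks_mul_fromRows, fromRows_mul, Matrix.neg_mul, Matrix.mul_smul,
    svd_conjTranspose_mul_eq hV₁ hB, svd_mul_eq hW hB, hdiag]
  simp [Matrix.mul_smul, smul_smul, hc]

variable [Fintype μ] [DecidableEq μ]

theorem exp_skewBlock_mul_fromRows (hW : Wᴴ * W = 1) (hV₁ : V₁ᴴ * V₁ = 1)
    (hB : B = V₁ * diagonal (fun i => (σ i : ℂ)) * Wᴴ) {c : ℂ} (hc : c * c = -1) :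
    NormedSpace.exp (fromBlocks 0 (-Bᴴ) B 0) * fromRows W (c • V₁) =
      fromRows W (c • V₁) * diagonal (fun l => cexp (-c * σ l)) := by
  rw [exp_mul_of_mul_eq_mul (skewBlock_mul_fromRows hW hV₁ hB hc), exp_diagonal, Pi.exp_def,
    ← Complex.exp_eq_exp_ℂ]

-- Without the ascription on `0`, the product elaborates through `CStarMatrix`'s `HMul`
-- instance, whose atoms `module` does not match with those of `exp_skewBlock_mul_fromRows`.
theorem exp_skewBlock_mul_fromRows_zero (hW : Wᴴ * W = 1) (hV₁ : V₁ᴴ * V₁ = 1)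
    (hB : B = V₁ * diagonal (fun i => (σ i : ℂ)) * Wᴴ) :
    NormedSpace.exp (fromBlocks 0 (-Bᴴ) B 0) * fromRows W (0 : Matrix μ ι ℂ) =
      fromRows (W * diagonal (fun l => (Real.cos (σ l) : ℂ)))
        (V₁ * diagonal (fun l => (Real.sin (σ l) : ℂ))) := by
  set P : Matrix (ι ⊕ μ) ι ℂ := fromRows W 0
  set Q : Matrix (ι ⊕ μ) ι ℂ := fromRows 0 V₁
  have hrows : ∀ c : ℂ, fromRows W (c • V₁) = P + c • Q := fun c => by
    ext (i | i) j <;> simp [P, Q]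
  have hplus := exp_skewBlock_mul_fromRows hW hV₁ hB (c := I) (by simp)
  have hminus := exp_skewBlock_mul_fromRows hW hV₁ hB (c := -I) (by simp)
  have hcos : diagonal (fun l => (Real.cos (σ l) : ℂ)) = (2⁻¹ : ℂ) •
      (diagonal (fun l => cexp (-I * σ l)) + diagonal (fun l => cexp (- -I * σ l))) := by
    rw [diagonal_add, ← diagonal_smul]
    congr 1; funext l
    simp only [Pi.smul_apply, smul_eq_mul, ofReal_cos, Complex.cos]
    ring_nf
  have hsin : diagonal (fun l => (Real.sin (σ l) : ℂ)) = (2⁻¹ * I : ℂ) •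
      (diagonal (fun l => cexp (-I * σ l)) - diagonal (fun l => cexp (- -I * σ l))) := by
    rw [diagonal_sub, ← diagonal_smul]
    congr 1; funext l
    simp only [Pi.smul_apply, smul_eq_mul, ofReal_sin, Complex.sin]
    ring_nf
  have hsplit : fromRows (W * diagonal (fun l => (Real.cos (σ l) : ℂ)))
        (V₁ * diagonal (fun l => (Real.sin (σ l) : ℂ))) =
      P * diagonal (fun l => (Real.cos (σ l) : ℂ)) +
        Q * diagonal (fun l => (Real.sin (σ l) : ℂ)) := by
    ext (i | i) j <;> simp [P, Q, fromRows_mul]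
  rw [hrows] at hplus hminus
  rw [hsplit, hcos, hsin]
  simp only [Matrix.mul_add, Matrix.add_mul, Matrix.mul_sub, Matrix.mul_smul,
    Matrix.smul_mul] at hplus hminus ⊢
  linear_combination (norm := module) (2⁻¹ : ℂ) • hplus + (2⁻¹ : ℂ) • hminus

end SkewBlock

theorem basePoint_eq_fromRows (k m : ℕ) : basePoint k m = fromRows 1 0 := by
  ext (i | i) j <;> simp [basePoint, one_apply]

theorem grassmann_geodesic_svd_general (k m : ℕ)
    (σ : Fin k → ℝ) (W : Matrix (Fin k) (Fin k) ℂ)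
    (hW : W ∈ Matrix.unitaryGroup (Fin k) ℂ)
    (V₁ : Matrix (Fin m) (Fin k) ℂ) (hV₁ : V₁ᴴ * V₁ = 1)
    (B : Matrix (Fin m) (Fin k) ℂ)
    (hB : B = V₁ * Matrix.diagonal (fun i => (σ i : ℂ)) * Wᴴ) :
    (∀ (i : Fin k) (j : Fin k),
      (NormedSpace.exp (Matrix.fromBlocks 0 (-Bᴴ) B 0) * basePoint k m)
          (Sum.inl i) j =
        (W * Matrix.diagonal (fun i => (Real.cos (σ i) : ℂ)) * Wᴴ) i j) ∧
    (∀ (i : Fin m) (j : Fin k),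
      (NormedSpace.exp (Matrix.fromBlocks 0 (-Bᴴ) B 0) * basePoint k m)
          (Sum.inr i) j =
        (V₁ * Matrix.diagonal (fun i => (Real.sin (σ i) : ℂ)) * Wᴴ) i j) := by
  have hbase : basePoint k m = fromRows W (0 : Matrix (Fin m) (Fin k) ℂ) * Wᴴ := by
    rw [basePoint_eq_fromRows, fromRows_mul, Matrix.zero_mul, ← star_eq_conjTranspose,
      Unitary.mul_star_self_of_mem hW]
  have hexp : NormedSpace.exp (fromBlocks 0 (-Bᴴ) B 0) * basePoint k m =
      fromRows (W * diagonal (fun l => (Real.cos (σ l) : ℂ)) * Wᴴ)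
        (V₁ * diagonal (fun l => (Real.sin (σ l) : ℂ)) * Wᴴ) := by
    rw [hbase, ← Matrix.mul_assoc, exp_skewBlock_mul_fromRows_zero
      (Unitary.star_mul_self_of_mem hW) hV₁ hB, fromRows_mul]
  exact ⟨fun i j => by rw [hexp, fromRows_apply_inl], fun i j => by rw [hexp, fromRows_apply_inr]⟩

/-- **Geodesics on the Grassmann manifold via the SVD.** If `B = V₁·diag(σ)·Wᴴ`
(`V₁ᴴV₁ = 1_k`, `W` unitary) and `X = [[0, −Bᴴ],[B, 0]]`, then
`exp(X)·[1_k; 0] = [W·diag(cos σ)·Wᴴ ; V₁·diag(sin σ)·Wᴴ]`; in particular the singular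
values of the upper `k×k` block are `cos σᵢ`, so the principal angles between
`⟨[1_k;0]⟩` and `⟨exp(X)[1_k;0]⟩` are the singular values of `B`. -/
theorem grassmann_geodesic_svd (k m : ℕ) (hk : 1 ≤ k) (hkm : k ≤ m)
    (σ : Fin k → ℝ) (W : Matrix (Fin k) (Fin k) ℂ)
    (hW : W ∈ Matrix.unitaryGroup (Fin k) ℂ)
    (V₁ : Matrix (Fin m) (Fin k) ℂ) (hV₁ : V₁ᴴ * V₁ = 1)
    (B : Matrix (Fin m) (Fin k) ℂ)
    (hB : B = V₁ * Matrix.diagonal (fun i => (σ i : ℂ)) * Wᴴ) :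
    (∀ (i : Fin k) (j : Fin k),
      (NormedSpace.exp (Matrix.fromBlocks 0 (-Bᴴ) B 0) * basePoint k m)
          (Sum.inl i) j =
        (W * Matrix.diagonal (fun i => (Real.cos (σ i) : ℂ)) * Wᴴ) i j) ∧
    (∀ (i : Fin m) (j : Fin k),
      (NormedSpace.exp (Matrix.fromBlocks 0 (-Bᴴ) B 0) * basePoint k m)
          (Sum.inr i) j =
        (V₁ * Matrix.diagonal (fun i => (Real.sin (σ i) : ℂ)) * Wᴴ) i j) :=
  grassmann_geodesic_svd_general k m σ W hW V₁ hV₁ B hB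
end
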